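/- For any set A in a topological space, the semi-boundary operator stabilizes after two iterations: sbd (sbd (sbd A)) = sbd (sbd A) (Theorem 3.18). -/

import Mathlib

open Set Topology

variable {X : Type*} [TopologicalSpace X]

/-- A set is semi-open if it lies between an open set and its closure. -/
def SemiOpen (A : Set X) : Prop :=
  ∃ U : Set X, IsOpen U ∧ U ⊆ A ∧ A ⊆ closure U

/-- A set is semi-closed if its complement is semi-open. -/
def SemiClosed (A : Set X) : Prop :=
  SemiOpen Aᶜ

/-- Semi-interior: the union of all semi-open subsets of `A`. -/
def sint (A : Set X) : Set X :=
  ⋃₀ {S : Set X | SemiOpen S ∧ S ⊆ A}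

/-- Semi-closure: the intersection of all semi-closed supersets of `A`. -/
def scl (A : Set X) : Set X :=
  ⋂₀ {C : Set X | SemiClosed C ∧ A ⊆ C}

/-- Semi-exterior: the semi-interior of the complement. -/
def sext (A : Set X) : Set X :=
  sint Aᶜ

/-- Semi-boundary. -/
def sbd (A : Set X) : Set X :=
  (sint A ∪ sext A)ᶜ

/-! `sbd A` is semi-closed, being the complement of the union of two semi-open sets. For a
semi-closed `B` the semi-exterior is all of `Bᶜ`, so `sbd B = B \ sint B`; and `B \ sint B` has
empty semi-interior for every `B`, since a semi-open subset of it would lie in `sint B`.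
Hence `sbd (sbd (sbd A)) = sbd (sbd A) \ sint (sbd A \ sint (sbd A)) = sbd (sbd A)`. -/

theorem semiOpen_iff_subset_closure_interior {A : Set X} :
    SemiOpen A ↔ A ⊆ closure (interior A) := by
  constructor
  · rintro ⟨U, hUo, hUA, hAU⟩
    exact hAU.trans (closure_mono (hUo.subset_interior_iff.mpr hUA))
  · exact fun h => ⟨interior A, isOpen_interior, interior_subset, h⟩

theorem SemiOpen.sUnion {𝒮 : Set (Set X)} (h : ∀ S ∈ 𝒮, SemiOpen S) : SemiOpen (⋃₀ 𝒮) :=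
  semiOpen_iff_subset_closure_interior.mpr <| sUnion_subset fun S hS =>
    (semiOpen_iff_subset_closure_interior.mp (h S hS)).trans
      (closure_mono (interior_mono (subset_sUnion_of_mem hS)))

theorem semiOpen_sint (A : Set X) : SemiOpen (sint A) :=
  SemiOpen.sUnion fun _ hS => hS.1

theorem sint_subset (A : Set X) : sint A ⊆ A :=
  sUnion_subset fun _ hS => hS.2

theorem SemiOpen.subset_sint {S A : Set X} (hS : SemiOpen S) (h : S ⊆ A) : S ⊆ sint A :=
  subset_sUnion_of_mem ⟨hS, h⟩

theorem SemiOpen.sint_eq {A : Set X} (hA : SemiOpen A) : sint A = A :=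
  (sint_subset A).antisymm (hA.subset_sint subset_rfl)

theorem semiClosed_sbd (A : Set X) : SemiClosed (sbd A) := by
  rw [SemiClosed, sbd, compl_compl, ← sUnion_pair]
  exact SemiOpen.sUnion (by rintro S (rfl | rfl) <;> exact semiOpen_sint _)

theorem SemiClosed.sbd_eq {B : Set X} (hB : SemiClosed B) : sbd B = B \ sint B := by
  rw [sbd, sext, SemiOpen.sint_eq hB, compl_union, compl_compl, sdiff_eq, inter_comm]

theorem sint_diff_sint_eq_empty (A : Set X) : sint (A \ sint A) = ∅ := by
  have hA : sint (A \ sint A) ⊆ sint A :=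
    (semiOpen_sint _).subset_sint ((sint_subset _).trans sdiff_subset)
  exact eq_empty_of_subset_empty fun x hx => (sint_subset _ hx).2 (hA hx)

theorem sbd_sbd_sbd (A : Set X) : sbd (sbd (sbd A)) = sbd (sbd A) := by
  rw [(semiClosed_sbd (sbd A)).sbd_eq, (semiClosed_sbd A).sbd_eq, sint_diff_sint_eq_empty,
    sdiff_empty]
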